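/- Let n ∈ ℕ and let p_t, p_s ∈ [0,1] with p_t ≤ p_s and p_t < 1. If X ~ Binomial(n, p_t) and, conditionally on X = x, B ~ Binomial(n - x, (p_s - p_t)/(1 - p_t)), then X + B ~ Binomial(n, p_s). -/

import Mathlib

/-! Conditioning on `X = x`, the pair `(X, B)` has weight
`C(n,x) C(n-x,k-x) · p_t^x (1-p_t)^(n-x) · β^(k-x) (1-β)^(n-k)`. With `1 - β = (1-p_s)/(1-p_t)`
and `C(n,x) C(n-x,k-x) = C(n,k) C(k,x)`, the powers of `1 - p_t` cancel and the term becomes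
`C(n,k) (1-p_s)^(n-k) · C(k,x) p_t^x (p_s-p_t)^(k-x)`; summing over `x` with the binomial
theorem for `p_s = p_t + (p_s - p_t)` gives `C(n,k) p_s^k (1-p_s)^(n-k)`. -/

/-- The binomial probability mass function `b(n,p,k) = C(n,k)·p^k·(1-p)^(n-k)`. -/
def binomialPMF (n : ℕ) (p : ℝ) (k : ℕ) : ℝ :=
  (n.choose k : ℝ) * p ^ k * (1 - p) ^ (n - k)

lemma binomialPMF_eq_zero_of_lt {n k : ℕ} (p : ℝ) (h : n < k) : binomialPMF n p k = 0 := by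
  simp [binomialPMF, Nat.choose_eq_zero_of_lt h]

lemma sum_range_choose_mul_pow_mul_sub_pow (a b : ℝ) (k : ℕ) :
    ∑ x ∈ Finset.range (k + 1), (k.choose x : ℝ) * a ^ x * (b - a) ^ (k - x) = b ^ k := by
  rw [← add_sub_cancel a b, add_pow]
  exact Finset.sum_congr rfl fun x _ => by ring

lemma binomialPMF_mul_binomialPMF_thinned {n k x : ℕ} {pt : ℝ} (ps : ℝ) (hpt1 : pt ≠ 1)
    (hxk : x ≤ k) :
    binomialPMF n pt x * binomialPMF (n - x) ((ps - pt) / (1 - pt)) (k - x)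
      = (n.choose k : ℝ) * (1 - ps) ^ (n - k) *
          ((k.choose x : ℝ) * pt ^ x * (ps - pt) ^ (k - x)) := by
  rcases le_or_gt k n with hkn | hnk
  · have hne : (1 : ℝ) - pt ≠ 0 := sub_ne_zero.mpr hpt1.symm
    have hchoose : (n.choose x : ℝ) * ((n - x).choose (k - x) : ℝ)
        = (n.choose k : ℝ) * (k.choose x : ℝ) := by
      exact_mod_cast Nat.choose_mul hxk |>.symm
    have hcompl : 1 - (ps - pt) / (1 - pt) = (1 - ps) / (1 - pt) := by
      field_simp
      ring
    have hpow : (1 - pt) ^ (n - x) = (1 - pt) ^ (k - x) * (1 - pt) ^ (n - k) := by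
      rw [← pow_add]
      congr 1
      omega
    rw [binomialPMF, binomialPMF, hcompl, show n - x - (k - x) = n - k by omega, div_pow,
      div_pow, hpow]
    field_simp
    linear_combination (pt ^ x * (ps - pt) ^ (k - x) * (1 - ps) ^ (n - k)) * hchoose
  · have hlhs : binomialPMF n pt x * binomialPMF (n - x) ((ps - pt) / (1 - pt)) (k - x) = 0 := by
      rcases le_or_gt x n with hxn | hnx
      · rw [binomialPMF_eq_zero_of_lt _ (by omega : n - x < k - x), mul_zero]
      · rw [binomialPMF_eq_zero_of_lt _ hnx, zero_mul]
    simp [hlhs, Nat.choose_eq_zero_of_lt hnk]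

theorem pure_birth_step_preserves_binomial_marginal_general
    (n : ℕ) (pt ps : ℝ)
    (hpt1 : pt < 1) :
    ∀ k : ℕ,
      ∑ x ∈ Finset.range (k + 1),
          binomialPMF n pt x * binomialPMF (n - x) ((ps - pt) / (1 - pt)) (k - x)
        = binomialPMF n ps k := by
  intro k
  rw [Finset.sum_congr rfl fun x hx => binomialPMF_mul_binomialPMF_thinned ps hpt1.ne
      (Nat.lt_succ_iff.mp (Finset.mem_range.mp hx)),
    ← Finset.mul_sum, sum_range_choose_mul_pow_mul_sub_pow, binomialPMF]
  ring

/-- **Zero-attrition reverse step preserves binomial marginals.**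
Let `n ∈ ℕ` and `p_t, p_s ∈ [0,1]` with `p_t ≤ p_s` and `p_t < 1`.  If
`X ~ Binomial(n, p_t)` and, conditionally on `X = x`,
`B ~ Binomial(n - x, (p_s - p_t)/(1 - p_t))`, then `X + B ~ Binomial(n, p_s)`:
as probability mass functions, for every `k`,
`Σ_{x=0}^{k} P(X = x)·P(B = k - x) = C(n,k)·p_s^k·(1-p_s)^{n-k}`. -/
theorem pure_birth_step_preserves_binomial_marginal
    (n : ℕ) (pt ps : ℝ)
    (hpt : pt ∈ Set.Icc (0 : ℝ) 1) (hps : ps ∈ Set.Icc (0 : ℝ) 1)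
    (hpts : pt ≤ ps) (hpt1 : pt < 1) :
    ∀ k : ℕ,
      ∑ x ∈ Finset.range (k + 1),
          binomialPMF n pt x * binomialPMF (n - x) ((ps - pt) / (1 - pt)) (k - x)
        = binomialPMF n ps k :=
  pure_birth_step_preserves_binomial_marginal_general n pt ps hpt1
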